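/- arXiv:2011.03030 — 2 statements merged into one kernel-verified Lean document; each statement's English description precedes it below -/
import Mathlib

section
/- Let F ⊆ [ℝ^p → ℝ^d] be a hypothesis class and Π_F = {π_f : f ∈ F} the induced plug-in policy class. Then the Natarajan dimension of Π_F is at most the VC-linear-subgraph dimension of F. -/
open MeasureTheory Real Set
open scoped InnerProductSpace ENNReal NNReal

noncomputable section

/-- `ℝ^k` with the Euclidean norm. -/
abbrev Euc (k : ℕ) : Type := EuclideanSpace ℝ (Fin k)

/-- `Z` is a polyhedron: the solution set of finitely many linear inequalities `Az ≤ b`. -/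
def IsPolyhedron {d : ℕ} (Z : Set (Euc d)) : Prop :=
  ∃ (m : ℕ) (A : Fin m → Euc d) (b : Fin m → ℝ), Z = {z | ∀ i, ⟪A i, z⟫_ℝ ≤ b i}

/-- The class `P` Natarajan-shatters `m` points: there are points `x i` and labels
`s i ≠ s' i` such that every pattern in `{0,1}^m` is realized by some `g ∈ P` taking
values in `{s i, s' i}` at each `x i`. -/
def NatShatters {α β : Type*} (P : Set (α → β)) (m : ℕ) : Prop :=
  ∃ (x : Fin m → α) (s s' : Fin m → β), (∀ i, s i ≠ s' i) ∧
    ∀ σ : Fin m → Bool, ∃ g ∈ P, ∀ i, g (x i) = if σ i then s i else s' i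

/-- The Natarajan dimension of `P` is at most `η`. -/
def NatDimLE {α β : Type*} (P : Set (α → β)) (η : ℕ) : Prop :=
  ∀ m, NatShatters P m → m ≤ η

/-- The class `F` VC-linear-subgraph-shatters `m` points `(x i, β i, t i)`:
every sign pattern of `1{β iᵀ f (x i) ≤ t i}` is realized by some `f ∈ F`. -/
def VCLShatters {p d : ℕ} (F : Set (Euc p → Euc d)) (m : ℕ) : Prop :=
  ∃ (x : Fin m → Euc p) (β : Fin m → Euc d) (t : Fin m → ℝ),
    ∀ σ : Fin m → Bool, ∃ f ∈ F, ∀ i, (⟪β i, f (x i)⟫_ℝ ≤ t i ↔ σ i = true)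

/-- The VC-linear-subgraph dimension of `F` is at most `ν`. -/
def VCLDimLE {p d : ℕ} (F : Set (Euc p → Euc d)) (ν : ℕ) : Prop :=
  ∀ m, VCLShatters F m → m ≤ ν

/-- `g` is the plug-in policy for `f` with ties broken consistently according to the
ordering `tb` on the extreme points of `Z`: `g x` is an extreme point of `Z` minimizing
`f(x)ᵀ z` over `z ∈ Z`, and among all extreme-point minimizers it is `tb`-minimal. -/
def IsPluginPolicy {p d : ℕ} (Z : Set (Euc d)) (tb : Euc d → ℕ) (f g : Euc p → Euc d) : Prop :=
  ∀ x, g x ∈ Set.extremePoints ℝ Z ∧ (∀ z ∈ Z, ⟪f x, g x⟫_ℝ ≤ ⟪f x, z⟫_ℝ) ∧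
    ∀ z ∈ Set.extremePoints ℝ Z, (∀ z' ∈ Z, ⟪f x, z⟫_ℝ ≤ ⟪f x, z'⟫_ℝ) → tb (g x) ≤ tb z

/-! Orient each Natarajan label pair `(s i, s' i)` of extreme points so that the first label comes
first in the tie-breaking order. For a plug-in policy `π_f` whose value at `x i` is one of the two
labels, `π_f (x i)` is then the first label exactly when `⟪s i - s' i, f (x i)⟫ ≤ 0`: ties go to
the earlier point. So the witnesses `(x i, s i - s' i, 0)` are VC-linear-subgraph shattered by `F`. -/

def NatShattersWith {α β : Type*} {m : ℕ} (P : Set (α → β)) (x : Fin m → α) (s s' : Fin m → β) :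
    Prop :=
  ∀ σ : Fin m → Bool, ∃ g ∈ P, ∀ i, g (x i) = if σ i then s i else s' i

namespace NatShattersWith

variable {α β : Type*} {m : ℕ} {P : Set (α → β)} {x : Fin m → α} {s s' : Fin m → β}

theorem mem_of_forall_apply_mem (h : NatShattersWith P x s s') {E : Set β}
    (hE : ∀ g ∈ P, ∀ y, g y ∈ E) (i : Fin m) : s i ∈ E ∧ s' i ∈ E := by
  obtain ⟨g, hg, hgs⟩ := h fun _ => true
  obtain ⟨g', hg', hgs'⟩ := h fun _ => false
  exact ⟨by simpa [hgs i] using hE g hg (x i), by simpa [hgs' i] using hE g' hg' (x i)⟩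

theorem swap (h : NatShattersWith P x s s') (w : Fin m → Bool) :
    NatShattersWith P x (fun i => if w i then s' i else s i) (fun i => if w i then s i else s' i) := by
  intro σ
  obtain ⟨g, hg, hgσ⟩ := h fun i => xor (σ i) (w i)
  refine ⟨g, hg, fun i => ?_⟩
  rw [hgσ i]
  dsimp only
  cases σ i <;> cases w i <;> simp

theorem exists_lt_labels (h : NatShattersWith P x s s') (hne : ∀ i, s i ≠ s' i) {E : Set β}
    (hE : ∀ g ∈ P, ∀ y, g y ∈ E) {γ : Type*} [LinearOrder γ] {k : β → γ}
    (hk : InjOn k E) :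
    ∃ a b : Fin m → β, (∀ i, a i ∈ E ∧ b i ∈ E ∧ k (a i) < k (b i)) ∧ NatShattersWith P x a b := by
  refine ⟨_, _, fun i => ?_, h.swap fun i => decide (k (s' i) < k (s i))⟩
  obtain ⟨hs, hs'⟩ := h.mem_of_forall_apply_mem hE i
  have hk_ne : k (s i) ≠ k (s' i) := fun heq => hne i (hk hs hs' heq)
  by_cases hlt : k (s' i) < k (s i)
  · simpa [hlt] using And.intro hs' (And.intro hs hlt)
  · simpa [hlt] using And.intro hs (And.intro hs' (lt_of_le_of_ne (not_lt.mp hlt) hk_ne))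

end NatShattersWith

theorem IsPluginPolicy.apply_eq_iff_inner_sub_nonpos {p d : ℕ} {Z : Set (Euc d)}
    {tb : Euc d → ℕ} {f g : Euc p → Euc d} (hg : IsPluginPolicy Z tb f g) {x : Euc p}
    {a b : Euc d} (ha : a ∈ extremePoints ℝ Z) (hb : b ∈ Z) (hab : tb a < tb b)
    (hgx : g x = a ∨ g x = b) :
    g x = a ↔ ⟪a - b, f x⟫_ℝ ≤ 0 := by
  obtain ⟨-, hmin, htie⟩ := hg x
  rw [inner_sub_left, sub_nonpos, real_inner_comm (f x) a, real_inner_comm (f x) b]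
  refine ⟨fun h => h ▸ hmin b hb, fun hle => hgx.resolve_right fun hgb => ?_⟩
  have ha_min : ∀ z ∈ Z, ⟪f x, a⟫_ℝ ≤ ⟪f x, z⟫_ℝ := fun z hz => hle.trans (hgb ▸ hmin z hz)
  exact (htie a ha ha_min).not_gt (hgb ▸ hab)

theorem natarajan_dim_plugin_le_vc_linear_subgraph_dim_general
    {p d : ℕ} (Z : Set (Euc d)) (tb : Euc d → ℕ) (F : Set (Euc p → Euc d)) (ν : ℕ)
    (htb : Set.InjOn tb (Set.extremePoints ℝ Z))
    (hdim : VCLDimLE F ν) :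
    NatDimLE {g : Euc p → Euc d | ∃ f ∈ F, IsPluginPolicy Z tb f g} ν := by
  rintro m ⟨x, s, s', hne, hsh⟩
  obtain ⟨a, b, hab, hsh⟩ :=
    NatShattersWith.exists_lt_labels hsh hne (fun _ ⟨_, _, hg⟩ y => (hg y).1) htb
  apply hdim m
  refine ⟨x, fun i => a i - b i, fun _ => 0, fun σ => ?_⟩
  obtain ⟨g, ⟨f, hf, hg⟩, hgσ⟩ := hsh σ
  refine ⟨f, hf, fun i => ?_⟩
  obtain ⟨ha, hb, hlt⟩ := hab i
  have hgx : g (x i) = a i ∨ g (x i) = b i := by rw [hgσ i]; cases σ i <;> simp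
  rw [← hg.apply_eq_iff_inner_sub_nonpos ha (extremePoints_subset hb) hlt hgx, hgσ i]
  cases σ i <;> simp [ne_of_apply_ne tb hlt.ne']

/-- The Natarajan dimension of the induced plug-in policy class
`Π_F = {π_f : f ∈ F}` is at most the VC-linear-subgraph dimension of `F`. -/
theorem natarajan_dim_plugin_le_vc_linear_subgraph_dim
    {p d : ℕ} (Z : Set (Euc d)) (tb : Euc d → ℕ) (F : Set (Euc p → Euc d)) (ν : ℕ)
    (hZ : IsPolyhedron Z)
    (hfin : (Set.extremePoints ℝ Z).Finite)
    (htb : Set.InjOn tb (Set.extremePoints ℝ Z))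
    (hdim : VCLDimLE F ν) :
    NatDimLE {g : Euc p → Euc d | ∃ f ∈ F, IsPluginPolicy Z tb f g} ν :=
  natarajan_dim_plugin_le_vc_linear_subgraph_dim_general Z tb F ν htb hdim
end
end

section
/- Suppose the noise condition holds with parameters α, γ ≥ 0 and P(|Z*(X)| > 1) = 0. For policies π taking values in Z∠, define d(π*,π) = (1/B)·E_X[f*(X)^⊤(π(X) − π*(X))] and d_Δ(π*,π) = P_X(π(X) ≠ π*(X)). Then for every such policy π: (i) d(π*,π) ≤ 2·d_Δ(π*,π), and (ii) d_Δ(π*,π) ≤ c_1·d(π*,π)^{α/(α+1)}, where c_1 = (α·γ^α)^{−α/(α+1)}·(α+1)·γ^α. -/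
open MeasureTheory Real Set
open scoped InnerProductSpace ENNReal NNReal

noncomputable section

/-- `f` is (a version of) the conditional mean `E[Y ∣ X]`, where `μ` is the joint law of
`(X, Y)`: `f` is measurable and `E[Y ; X ∈ s] = E[f(X) ; X ∈ s]` for every measurable `s`. -/
def IsCondMean {p d : ℕ} (μ : Measure (Euc p × Euc d)) (f : Euc p → Euc d) : Prop :=
  Measurable f ∧ ∀ s : Set (Euc p), MeasurableSet s →
    ∫ xy in Prod.fst ⁻¹' s, xy.2 ∂μ = ∫ xy in Prod.fst ⁻¹' s, f xy.1 ∂μ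

/-- `g` is a plug-in policy for `f`: `g x` is an extreme point of `Z` minimizing
`f(x)ᵀ z` over `z ∈ Z`. -/
def IsOptPolicy {p d : ℕ} (Z : Set (Euc d)) (f g : Euc p → Euc d) : Prop :=
  ∀ x, g x ∈ Set.extremePoints ℝ Z ∧ ∀ z ∈ Z, ⟪f x, g x⟫_ℝ ≤ ⟪f x, z⟫_ℝ

/-- The set of optimal solutions `Z*(x) = argmin_{z ∈ Z} f(x)ᵀ z`. -/
def optSet {p d : ℕ} (Z : Set (Euc d)) (f : Euc p → Euc d) (x : Euc p) : Set (Euc d) :=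
  {z ∈ Z | ∀ z' ∈ Z, ⟪f x, z⟫_ℝ ≤ ⟪f x, z'⟫_ℝ}

open Classical in
/-- The suboptimality gap `Δ(x)`: the difference between the best objective value among
non-optimal extreme points and the optimal value, with `Δ(x) = 0` when `Z*(x) = Z`. -/
def gapFn {p d : ℕ} (Z : Set (Euc d)) (f : Euc p → Euc d) (x : Euc p) : ℝ :=
  if optSet Z f x = Z then 0
  else sInf ((fun z => ⟪f x, z⟫_ℝ) '' (Set.extremePoints ℝ Z \ optSet Z f x))
        - sInf ((fun z => ⟪f x, z⟫_ℝ) '' Z)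

/-- The noise (margin) condition with parameters `α, γ`:
`P(0 < Δ(X) ≤ δ) ≤ (γ δ / B)^α` for all `δ > 0`. -/
def NoiseCondition {p d : ℕ} (Z : Set (Euc d)) (B : ℝ)
    (μ : Measure (Euc p × Euc d)) (fstar : Euc p → Euc d) (α γ : ℝ) : Prop :=
  ∀ δ : ℝ, 0 < δ →
    μ {xy | 0 < gapFn Z fstar xy.1 ∧ gapFn Z fstar xy.1 ≤ δ}
      ≤ ENNReal.ofReal ((γ * δ / B) ^ α)

/-! Since `E[Y ∣ X]` of a unit-ball valued `Y` lies a.s. in the unit ball, the regret integrand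
`f*(x)ᵀ(π(x) − π*(x))` vanishes where the two policies agree and is at most `2B` elsewhere,
which gives (i). Where they disagree, uniqueness of the optimum makes `π(x)` a non-optimal
vertex, so the integrand is at least `Δ(x) > 0`. Splitting the disagreement event into
`{integrand ≥ δ}` (Markov) and `{0 < Δ ≤ δ}` (noise condition) bounds `d_Δ` by
`d B / δ + (γ δ / B)^α` for every `δ > 0`; optimizing over `δ` gives (ii). -/

open Filter Topology

lemma le_of_forall_le_div_add {s D c : ℝ} (h : ∀ t > 0, s ≤ D / t + c) : s ≤ c := by
  have hlim : Tendsto (fun t : ℝ => D / t + c) atTop (𝓝 (0 + c)) :=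
    (tendsto_const_nhds.div_atTop tendsto_id).add_const c
  rw [zero_add] at hlim
  exact ge_of_tendsto hlim ((eventually_gt_atTop 0).mono h)

lemma nonpos_of_forall_le_mul_rpow {s γ α : ℝ} (hα : 0 < α) (h : ∀ t > 0, s ≤ (γ * t) ^ α) :
    s ≤ 0 := by
  have hlim : Tendsto (fun t : ℝ => (γ * t) ^ α) (𝓝[>] 0) (𝓝 ((γ * 0) ^ α)) :=
    ((continuous_const.mul continuous_id).rpow_const fun _ => Or.inr hα.le).continuousWithinAt
  rw [mul_zero, zero_rpow hα.ne'] at hlim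
  exact ge_of_tendsto hlim (eventually_nhdsWithin_of_forall h)

/-- The minimum of `t ↦ D / t + (γ t)^α`, attained at `t = (D / (α γ^α))^{1/(α+1)}`. -/
lemma exists_div_add_mul_rpow_eq {D γ α : ℝ} (hD : 0 < D) (hγ : 0 < γ) (hα : 0 < α) :
    ∃ t > 0, D / t + (γ * t) ^ α
      = (α * γ ^ α) ^ (-(α / (α + 1))) * (α + 1) * γ ^ α * D ^ (α / (α + 1)) := by
  set K := α * γ ^ α
  set a := α / (α + 1)
  have hK : 0 < K := by positivity
  refine ⟨(D / K) ^ (1 - a), by positivity, ?_⟩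
  have hDt : D / (D / K) ^ (1 - a) = D ^ a * K * K ^ (-a) := by
    rw [div_rpow hD.le hK.le, rpow_sub hD, rpow_sub hK, rpow_one, rpow_one, rpow_neg hK.le]
    field_simp
  have hγt : (γ * (D / K) ^ (1 - a)) ^ α = γ ^ α * D ^ a * K ^ (-a) := by
    rw [mul_rpow hγ.le (by positivity), ← rpow_mul (by positivity), div_rpow hD.le hK.le,
      rpow_neg hK.le]
    have hexp : (1 - a) * α = a := by simp only [a]; field_simp; ring
    rw [hexp]
    ring
  rw [hDt, hγt]
  simp only [K]
  ring

lemma le_of_forall_le_div_add_mul_rpow {s D γ α : ℝ} (hD : 0 ≤ D) (hγ : 0 ≤ γ) (hα : 0 ≤ α)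
    (h : ∀ t > 0, s ≤ D / t + (γ * t) ^ α) :
    s ≤ (α * γ ^ α) ^ (-(α / (α + 1))) * (α + 1) * γ ^ α * D ^ (α / (α + 1)) := by
  rcases hα.eq_or_lt with rfl | hα
  · simp only [rpow_zero] at h
    simpa using le_of_forall_le_div_add h
  have hRHS : 0 ≤ (α * γ ^ α) ^ (-(α / (α + 1))) * (α + 1) * γ ^ α * D ^ (α / (α + 1)) := by
    positivity
  rcases hγ.eq_or_lt with rfl | hγ
  · simp only [zero_mul, zero_rpow hα.ne'] at h
    exact (le_of_forall_le_div_add h).trans hRHS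
  rcases hD.eq_or_lt with rfl | hD
  · simp only [zero_div, zero_add] at h
    exact (nonpos_of_forall_le_mul_rpow hα h).trans hRHS
  obtain ⟨t, ht, heq⟩ := exists_div_add_mul_rpow_eq hD hγ hα
  exact heq ▸ h t ht

lemma norm_inner_sub_le {E : Type*} [NormedAddCommGroup E] [InnerProductSpace ℝ E] {B : ℝ}
    {c z z' : E} (hc : ‖c‖ ≤ 1) (hz : ‖z‖ ≤ B) (hz' : ‖z'‖ ≤ B) : ‖⟪c, z - z'⟫_ℝ‖ ≤ 2 * B :=
  calc ‖⟪c, z - z'⟫_ℝ‖ ≤ ‖c‖ * ‖z - z'‖ := norm_inner_le_norm _ _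
    _ ≤ 1 * (B + B) :=
        mul_le_mul hc ((norm_sub_le _ _).trans (add_le_add hz hz')) (norm_nonneg _) zero_le_one
    _ = 2 * B := by ring

section Gap

variable {p d : ℕ} {Z : Set (Euc d)} {f : Euc p → Euc d}

lemma isLeast_image_inner_of_mem_optSet {x : Euc p} {z : Euc d} (hz : z ∈ optSet Z f x) :
    IsLeast ((fun z => ⟪f x, z⟫_ℝ) '' Z) ⟪f x, z⟫_ℝ :=
  ⟨⟨z, hz.1, rfl⟩, by rintro _ ⟨w, hw, rfl⟩; exact hz.2 w hw⟩

lemma IsOptPolicy.mem_optSet {g : Euc p → Euc d} (hg : IsOptPolicy Z f g) (x : Euc p) :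
    g x ∈ optSet Z f x :=
  ⟨extremePoints_subset (hg x).1, (hg x).2⟩

lemma IsOptPolicy.inner_sub_nonneg {g : Euc p → Euc d} (hg : IsOptPolicy Z f g) (x : Euc p)
    {z : Euc d} (hz : z ∈ Z) : 0 ≤ ⟪f x, z - g x⟫_ℝ := by
  rw [inner_sub_right, sub_nonneg]
  exact (hg x).2 z hz

lemma gapFn_pos_and_le_inner_sub (hfin : (extremePoints ℝ Z).Finite) {x : Euc p}
    (huniq : ¬ (optSet Z f x).Nontrivial) {z zstar : Euc d} (hz : z ∈ extremePoints ℝ Z)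
    (hstar : zstar ∈ optSet Z f x) (hne : z ≠ zstar) :
    0 < gapFn Z f x ∧ gapFn Z f x ≤ ⟪f x, z - zstar⟫_ℝ := by
  have hz_opt : z ∉ optSet Z f x := fun h => huniq ⟨z, h, zstar, hstar, hne⟩
  have hopt_ne : optSet Z f x ≠ Z := fun h => hz_opt (h.symm ▸ extremePoints_subset hz)
  have hzE : z ∈ extremePoints ℝ Z \ optSet Z f x := ⟨hz, hz_opt⟩
  have hfinE := (hfin.sdiff (t := optSet Z f x)).image (fun w => ⟪f x, w⟫_ℝ)
  obtain ⟨z₁, hz₁, hz₁_eq⟩ := (Set.Nonempty.image _ ⟨z, hzE⟩).csInf_mem hfinE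
  have hgap : gapFn Z f x = ⟪f x, z₁⟫_ℝ - ⟪f x, zstar⟫_ℝ := by
    rw [gapFn, if_neg hopt_ne, (isLeast_image_inner_of_mem_optSet hstar).csInf_eq, ← hz₁_eq]
  refine ⟨hgap ▸ sub_pos.2 (lt_of_not_ge fun hle => hz₁.2 ?_), ?_⟩
  · exact ⟨extremePoints_subset hz₁.1, fun w hw => hle.trans (hstar.2 w hw)⟩
  · rw [hgap, inner_sub_right]
    exact sub_le_sub_right (hz₁_eq.trans_le (csInf_le hfinE.bddBelow ⟨z, hzE, rfl⟩)) _

end Gap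
section CondMean

variable {p d : ℕ} {μ : Measure (Euc p × Euc d)} {f : Euc p → Euc d}

/-- The truncation `‖f x‖ ≤ n` makes `f ∘ Prod.fst` integrable on the set, so that the
defining identity of `IsCondMean` can be compared with the bound `⟪v, y⟫ ≤ ‖v‖`. -/
lemma measure_inner_ge_norm_add_eq_zero [IsFiniteMeasure μ] (hf : IsCondMean μ f)
    (hY : ∀ᵐ xy ∂μ, ‖xy.2‖ ≤ 1) (v : Euc d) {ε : ℝ} (hε : 0 < ε) (n : ℕ) :
    μ (Prod.fst ⁻¹' {x | ‖v‖ + ε ≤ ⟪v, f x⟫_ℝ ∧ ‖f x‖ ≤ n}) = 0 := by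
  set s := {x | ‖v‖ + ε ≤ ⟪v, f x⟫_ℝ ∧ ‖f x‖ ≤ n}
  set T : Set (Euc p × Euc d) := Prod.fst ⁻¹' s
  have hs : MeasurableSet s :=
    (measurableSet_le (measurable_const (a := ‖v‖ + ε)) hf.1.const_inner).inter
      (measurableSet_le hf.1.norm (measurable_const (a := (n : ℝ))))
  have hT : MeasurableSet T := measurable_fst hs
  have hYint : Integrable (fun xy : Euc p × Euc d => xy.2) (μ.restrict T) :=
    (integrable_const 1).mono' measurable_snd.aestronglyMeasurable (ae_restrict_of_ae hY)
  have hfint : Integrable (fun xy : Euc p × Euc d => f xy.1) (μ.restrict T) :=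
    (integrable_const (n : ℝ)).mono' (hf.1.comp measurable_fst).aestronglyMeasurable
      ((ae_restrict_mem hT).mono fun _ hxy => hxy.2)
  have heq : ∫ xy in T, ⟪v, xy.2⟫_ℝ ∂μ = ∫ xy in T, ⟪v, f xy.1⟫_ℝ ∂μ := by
    rw [integral_inner hYint, integral_inner hfint, hf.2 s hs]
  have hupper : ∫ xy in T, ⟪v, xy.2⟫_ℝ ∂μ ≤ μ.real T * ‖v‖ := by
    rw [← smul_eq_mul, ← setIntegral_const]
    refine integral_mono_ae (hYint.const_inner v) (integrable_const _) ?_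
    filter_upwards [ae_restrict_of_ae hY] with xy hxy
    exact (real_inner_le_norm v xy.2).trans (mul_le_of_le_one_right (norm_nonneg v) hxy)
  have hlower : (‖v‖ + ε) * μ.real T ≤ ∫ xy in T, ⟪v, f xy.1⟫_ℝ ∂μ :=
    setIntegral_ge_of_const_le_real hT (measure_ne_top _ _) (fun _ hxy => hxy.1)
      (hfint.const_inner v)
  have hT_zero : μ.real T = 0 := by nlinarith [measureReal_nonneg (μ := μ) (s := T)]
  exact (measureReal_eq_zero_iff (measure_ne_top _ _)).1 hT_zero

lemma ae_inner_le_norm_of_isCondMean [IsFiniteMeasure μ] (hf : IsCondMean μ f)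
    (hY : ∀ᵐ xy ∂μ, ‖xy.2‖ ≤ 1) (v : Euc d) : ∀ᵐ xy ∂μ, ⟪v, f xy.1⟫_ℝ ≤ ‖v‖ := by
  refine measure_mono_null (fun xy hxy => ?_) ((measure_iUnion_null_iff.2 fun m =>
    measure_iUnion_null_iff.2 fun n =>
      measure_inner_ge_norm_add_eq_zero hf hY v (Nat.one_div_pos_of_nat (n := m)) n))
  have hlt : ‖v‖ < ⟪v, f xy.1⟫_ℝ := not_le.1 hxy
  obtain ⟨m, hm⟩ := exists_nat_one_div_lt (sub_pos.2 hlt)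
  refine mem_iUnion.2 ⟨m, mem_iUnion.2 ⟨⌈‖f xy.1‖⌉₊, ?_, Nat.le_ceil _⟩⟩
  linarith

lemma ae_norm_le_one_of_isCondMean [IsFiniteMeasure μ] (hf : IsCondMean μ f)
    (hY : ∀ᵐ xy ∂μ, ‖xy.2‖ ≤ 1) : ∀ᵐ xy ∂μ, ‖f xy.1‖ ≤ 1 := by
  -- a dense sequence of directions suffices by continuity in `v`; then take `v = f x`
  obtain ⟨u, hu⟩ := TopologicalSpace.exists_dense_seq (Euc d)
  filter_upwards [ae_all_iff.2 fun n => ae_inner_le_norm_of_isCondMean hf hY (u n)] with xy hxy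
  have hself : ⟪f xy.1, f xy.1⟫_ℝ ≤ ‖f xy.1‖ :=
    hu.induction_on (p := fun w => ⟪w, f xy.1⟫_ℝ ≤ ‖w‖) (f xy.1)
      (isClosed_le (continuous_id.inner continuous_const) continuous_norm) hxy
  rw [real_inner_self_eq_norm_sq] at hself
  nlinarith [norm_nonneg (f xy.1)]

end CondMean

section Regret

variable {Ω : Type*} [MeasurableSpace Ω] {μ : Measure Ω} {d : ℕ} {B : ℝ} {F G H : Ω → Euc d}

lemma integrable_inner_sub [IsFiniteMeasure μ] (hF : Measurable F) (hG : Measurable G)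
    (hH : Measurable H) (hF₁ : ∀ᵐ ω ∂μ, ‖F ω‖ ≤ 1) (hGB : ∀ ω, ‖G ω‖ ≤ B)
    (hHB : ∀ ω, ‖H ω‖ ≤ B) : Integrable (fun ω => ⟪F ω, G ω - H ω⟫_ℝ) μ :=
  (integrable_const (2 * B)).mono' (hF.inner (hG.sub hH)).aestronglyMeasurable
    (hF₁.mono fun ω h => norm_inner_sub_le h (hGB ω) (hHB ω))

lemma integral_inner_sub_le [IsFiniteMeasure μ] (hF : Measurable F) (hG : Measurable G)
    (hH : Measurable H) (hF₁ : ∀ᵐ ω ∂μ, ‖F ω‖ ≤ 1) (hGB : ∀ ω, ‖G ω‖ ≤ B)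
    (hHB : ∀ ω, ‖H ω‖ ≤ B) :
    ∫ ω, ⟪F ω, G ω - H ω⟫_ℝ ∂μ ≤ 2 * B * μ.real {ω | G ω ≠ H ω} := by
  have hS : MeasurableSet {ω | G ω ≠ H ω} := (measurableSet_eq_fun hG hH).compl
  calc ∫ ω, ⟪F ω, G ω - H ω⟫_ℝ ∂μ
      ≤ ∫ ω, {ω | G ω ≠ H ω}.indicator (fun _ => 2 * B) ω ∂μ := by
        refine integral_mono_ae (integrable_inner_sub hF hG hH hF₁ hGB hHB)
          ((integrable_const _).indicator hS) ?_
        filter_upwards [hF₁] with ω hω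
        by_cases hGH : G ω = H ω
        · simp [hGH]
        · rw [indicator_of_mem hGH]
          exact le_of_abs_le (norm_inner_sub_le hω (hGB ω) (hHB ω))
    _ = 2 * B * μ.real {ω | G ω ≠ H ω} := by
        rw [integral_indicator_const _ hS, smul_eq_mul, mul_comm]

end Regret

lemma measureReal_le_of_gapFn_le {p d : ℕ} {Z : Set (Euc d)} {B α γ : ℝ}
    {μ : Measure (Euc p × Euc d)} [IsFiniteMeasure μ] {f : Euc p → Euc d}
    {S : Set (Euc p × Euc d)} {r : Euc p × Euc d → ℝ} (hB : 0 < B) (hγ : 0 ≤ γ)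
    (hnoise : NoiseCondition Z B μ f α γ) (hr : 0 ≤ᵐ[μ] r) (hint : Integrable r μ)
    (hgap : ∀ᵐ xy ∂μ, xy ∈ S → 0 < gapFn Z f xy.1 ∧ gapFn Z f xy.1 ≤ r xy) {t : ℝ}
    (ht : 0 < t) : μ.real S ≤ (1 / B * ∫ xy, r xy ∂μ) / t + (γ * t) ^ α := by
  set A₁ := {xy | B * t ≤ r xy}
  set A₂ := {xy : Euc p × Euc d | 0 < gapFn Z f xy.1 ∧ gapFn Z f xy.1 ≤ B * t}
  have hS : μ.real S ≤ μ.real A₁ + μ.real A₂ := by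
    refine (ENNReal.toReal_mono (measure_ne_top _ _) (measure_mono_ae ?_)).trans
      (measureReal_union_le A₁ A₂)
    filter_upwards [hgap] with xy h hS
    rcases le_or_gt (gapFn Z f xy.1) (B * t) with hle | hlt
    · exact Or.inr ⟨(h hS).1, hle⟩
    · exact Or.inl (hlt.le.trans (h hS).2)
  have hA₁ : μ.real A₁ ≤ (1 / B * ∫ xy, r xy ∂μ) / t := by
    have hmarkov := mul_meas_ge_le_integral_of_nonneg hr hint (B * t)
    rw [le_div_iff₀ ht, one_div, le_inv_mul_iff₀ hB]
    linarith
  have hA₂ : μ.real A₂ ≤ (γ * t) ^ α := by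
    have hδ : γ * (B * t) / B = γ * t := by field_simp
    exact ENNReal.toReal_le_of_le_ofReal (by positivity) (hδ ▸ hnoise (B * t) (by positivity))
  linarith

theorem regret_disagreement_comparison_general
    {p d : ℕ} (α γ B : ℝ) (hα : 0 ≤ α) (hγ : 0 ≤ γ) (hB : 0 < B)
    (Z : Set (Euc d)) (μ : Measure (Euc p × Euc d)) [IsProbabilityMeasure μ]
    (fstar pistar pol : Euc p → Euc d)
    (hBZ : ∀ z ∈ Z, ‖z‖ ≤ B)
    (hfin : (Set.extremePoints ℝ Z).Finite)
    (hY : ∀ᵐ xy ∂μ, ‖xy.2‖ ≤ 1)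
    (hf : IsCondMean μ fstar)
    (hnoise : NoiseCondition Z B μ fstar α γ)
    (hunique : μ {xy | (optSet Z fstar xy.1).Nontrivial} = 0)
    (hstar : IsOptPolicy Z fstar pistar) (hmstar : Measurable pistar)
    (hpol : ∀ x, pol x ∈ Set.extremePoints ℝ Z) (hmpol : Measurable pol) :
    (1 / B) * ∫ xy, ⟪fstar xy.1, pol xy.1 - pistar xy.1⟫_ℝ ∂μ
        ≤ 2 * (μ {xy | pol xy.1 ≠ pistar xy.1}).toReal ∧
      (μ {xy | pol xy.1 ≠ pistar xy.1}).toReal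
        ≤ ((α * γ ^ α) ^ (-(α / (α + 1)))) * (α + 1) * γ ^ α
            * (((1 / B) * ∫ xy, ⟪fstar xy.1, pol xy.1 - pistar xy.1⟫_ℝ ∂μ)
                ^ (α / (α + 1))) := by
  have hf₁ := ae_norm_le_one_of_isCondMean hf hY
  have hpolZ x : pol x ∈ Z := extremePoints_subset (hpol x)
  have hpolB (xy : Euc p × Euc d) : ‖pol xy.1‖ ≤ B := hBZ _ (hpolZ xy.1)
  have hstarB (xy : Euc p × Euc d) : ‖pistar xy.1‖ ≤ B := hBZ _ (hstar.mem_optSet xy.1).1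
  have hF : Measurable fun xy : Euc p × Euc d => fstar xy.1 := hf.1.comp measurable_fst
  have hG : Measurable fun xy : Euc p × Euc d => pol xy.1 := hmpol.comp measurable_fst
  have hH : Measurable fun xy : Euc p × Euc d => pistar xy.1 := hmstar.comp measurable_fst
  have hregret_nonneg (xy : Euc p × Euc d) : 0 ≤ ⟪fstar xy.1, pol xy.1 - pistar xy.1⟫_ℝ :=
    hstar.inner_sub_nonneg xy.1 (hpolZ xy.1)
  have hgap : ∀ᵐ xy ∂μ, xy ∈ {xy | pol xy.1 ≠ pistar xy.1} → 0 < gapFn Z fstar xy.1 ∧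
      gapFn Z fstar xy.1 ≤ ⟪fstar xy.1, pol xy.1 - pistar xy.1⟫_ℝ := by
    filter_upwards [measure_eq_zero_iff_ae_notMem.1 hunique] with xy huniq hne
    exact gapFn_pos_and_le_inner_sub hfin huniq (hpol xy.1) (hstar.mem_optSet xy.1) hne
  refine ⟨?_, le_of_forall_le_div_add_mul_rpow ?_ hγ hα fun t ht => ?_⟩
  · have := integral_inner_sub_le hF hG hH hf₁ hpolB hstarB
    rw [one_div, inv_mul_le_iff₀ hB, ← measureReal_def]
    linarith
  · exact mul_nonneg (by positivity) (integral_nonneg hregret_nonneg)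
  · exact measureReal_le_of_gapFn_le hB hγ hnoise (Eventually.of_forall hregret_nonneg)
      (integrable_inner_sub hF hG hH hf₁ hpolB hstarB) hgap ht

/-- Comparison of the regret pseudo-distance
`d(π*,π) = (1/B) E_X[f*(X)ᵀ(π(X) − π*(X))]` and the disagreement probability
`d_Δ(π*,π) = P_X(π(X) ≠ π*(X))` under the noise condition with a.s. unique optima:
`d ≤ 2 d_Δ` and `d_Δ ≤ c₁ d^{α/(α+1)}` with `c₁ = (α γ^α)^{−α/(α+1)} (α+1) γ^α`. -/
theorem regret_disagreement_comparison
    {p d : ℕ} (α γ B : ℝ) (hα : 0 ≤ α) (hγ : 0 ≤ γ) (hB : 0 < B)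
    (Z : Set (Euc d)) (μ : Measure (Euc p × Euc d)) [IsProbabilityMeasure μ]
    (fstar pistar pol : Euc p → Euc d)
    (hZ : IsPolyhedron Z)
    (hBZ : ∀ z ∈ Z, ‖z‖ ≤ B)
    (hfin : (Set.extremePoints ℝ Z).Finite)
    (hY : ∀ᵐ xy ∂μ, ‖xy.2‖ ≤ 1)
    (hf : IsCondMean μ fstar)
    (hnoise : NoiseCondition Z B μ fstar α γ)
    (hunique : μ {xy | (optSet Z fstar xy.1).Nontrivial} = 0)
    (hstar : IsOptPolicy Z fstar pistar) (hmstar : Measurable pistar)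
    (hpol : ∀ x, pol x ∈ Set.extremePoints ℝ Z) (hmpol : Measurable pol) :
    (1 / B) * ∫ xy, ⟪fstar xy.1, pol xy.1 - pistar xy.1⟫_ℝ ∂μ
        ≤ 2 * (μ {xy | pol xy.1 ≠ pistar xy.1}).toReal ∧
      (μ {xy | pol xy.1 ≠ pistar xy.1}).toReal
        ≤ ((α * γ ^ α) ^ (-(α / (α + 1)))) * (α + 1) * γ ^ α
            * (((1 / B) * ∫ xy, ⟪fstar xy.1, pol xy.1 - pistar xy.1⟫_ℝ ∂μ)
                ^ (α / (α + 1))) :=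
  regret_disagreement_comparison_general α γ B hα hγ hB Z μ fstar pistar pol hBZ hfin hY hf hnoise
    hunique hstar hmstar hpol hmpol
end
end
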